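/- Let p be an odd prime with Pisano period l_p = 2p+2 and β(p) = 2, and let C = ⟨f(x)⟩ be the cyclic code of parameters [2p+2, 2, 2p] over F_p generated by the Fibonacci polynomial f(x) (coordinates indexed 0, 1, …, 2p+1). Then C has exactly p minimal codewords; coordinate p+1 belongs to the support of every minimal codeword of C; and for each coordinate i with 1 ≤ i ≤ 2p+1 and i ≠ p+1, exactly p−1 of the minimal codewords of C have i in their support. -/

import Mathlib

/-!
Since `F` has period `l = 2p + 2` and exactly two zeros `0` and `p + 1` in a period, the code
is spanned by `V = (F_i)_i` and its cyclic shift `W = (F_{i-1})_i`: the second shift is `V - W`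
by the Fibonacci recursion. As `V_0 = 0` and `W_0 = 1`, the codewords with first coordinate `1`
are the `p` words `aV + W`, with coordinates `a F_{m+1} + F_m` at `m + 1`. By d'Ocagne's identity
the ratios `F_m / F_{m+1}`, `m < p`, are pairwise distinct, so every `aV + W` vanishes at a
coordinate where `V` does not; there any codeword supported inside `supp(aV + W)` is forced to be
a multiple of `aV + W`. Finally `aV + W` takes the value `F_p ≠ 0` at `p + 1`, and at any other
coordinate `i ≠ 0` vanishes for exactly one `a`.
-/

open Polynomial

/-- The Fibonacci sequence over `ZMod p`: `F 0 = 0`, `F 1 = 1`, `F (n+2) = F (n+1) + F n`. -/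
def fibMod (p : ℕ) : ℕ → ZMod p
  | 0 => 0
  | 1 => 1
  | n + 2 => fibMod p (n + 1) + fibMod p n

/-- The Pisano period of `p`: the least `t > 0` with `F t = F 0 = 0` and `F (t+1) = F 1 = 1`. -/
noncomputable def pisano (p : ℕ) : ℕ :=
  sInf {t : ℕ | 0 < t ∧ fibMod p t = 0 ∧ fibMod p (t + 1) = 1}

/-- `β(p)`: the number of indices `0 ≤ i < l_p` with `F i = 0` in `ZMod p`. -/
noncomputable def betaP (p : ℕ) : ℕ :=
  ((Finset.range (pisano p)).filter fun i => fibMod p i = 0).card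

/-- The Fibonacci polynomial `f(x) = ∑_{i=0}^{l_p - 1} F_i x^i` over `ZMod p`. -/
noncomputable def fibPoly (p : ℕ) : (ZMod p)[X] :=
  ∑ i ∈ Finset.range (pisano p), C (fibMod p i) * X ^ i

/-- Cyclic shift of a vector of length `l`: the shift `v ↦ (v_{l-1}, v_0, …, v_{l-2})`,
which corresponds to multiplication by `x` modulo `x^l - 1` on coefficient vectors. -/
def cyclicShift (p l : ℕ) (v : Fin l → ZMod p) : Fin l → ZMod p :=
  fun i => v ⟨((i : ℕ) + (l - 1)) % l, Nat.mod_lt _ i.pos⟩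

/-- The coefficient vector of length `l` of a polynomial. -/
def polyVec (p l : ℕ) (g : (ZMod p)[X]) : Fin l → ZMod p := fun i => g.coeff i

/-- The cyclic code of length `l` generated by `g`: the ideal generated by the image of `g`
in `F_p[x]/(x^l - 1)`, identified with the subspace of `F_p^l` of coefficient vectors via
`a_0 + a_1 x + ⋯ + a_{l-1} x^{l-1} ↦ (a_0, …, a_{l-1})`; equivalently (since multiplication
by `x` is the cyclic shift), the `F_p`-span of all cyclic shifts of the coefficient vector
of `g`. -/
noncomputable def cyclicCode (p l : ℕ) (g : (ZMod p)[X]) :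
    Submodule (ZMod p) (Fin l → ZMod p) :=
  Submodule.span (ZMod p) {w | ∃ k : ℕ, w = (cyclicShift p l)^[k] (polyVec p l g)}

/-- The cyclic code of length `l` generated by the Fibonacci polynomial `f(x)`. -/
noncomputable def fibCode (p l : ℕ) : Submodule (ZMod p) (Fin l → ZMod p) :=
  cyclicCode p l (fibPoly p)

/-- A minimal codeword of a code `Cc ⊆ F_p^l`: a nonzero codeword `c` with first coordinate
`c 0 = 1` such that every codeword of `Cc` whose support is contained in `supp(c)` is a
scalar multiple of `c`. -/
def IsMinimalCodeword (p l : ℕ) (Cc : Submodule (ZMod p) (Fin l → ZMod p))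
    (c : Fin l → ZMod p) : Prop :=
  c ∈ Cc ∧ c ≠ 0 ∧ (∀ h : 0 < l, c ⟨0, h⟩ = 1) ∧
    ∀ v ∈ Cc, (∀ i, v i ≠ 0 → c i ≠ 0) → ∃ k : ZMod p, v = k • c

open Submodule

section Fibonacci

variable {p : ℕ}

theorem fibMod_add_two (n : ℕ) : fibMod p (n + 2) = fibMod p (n + 1) + fibMod p n := rfl

theorem fibMod_add_mul_sub_mul (k n : ℕ) :
    fibMod p (n + k) * fibMod p (n + 1) - fibMod p (n + k + 1) * fibMod p n =
      (-1) ^ n * fibMod p k := by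
  induction n with
  | zero => simp [fibMod]
  | succ n ih =>
    rw [show n + 1 + k = n + k + 1 by ring, show n + k + 1 + 1 = n + k + 2 by ring,
      fibMod_add_two (n + k), fibMod_add_two n, pow_succ]
    linear_combination (-1 : ZMod p) * ih

theorem fibMod_add_of_fibMod_eq_zero {j : ℕ} (hj : fibMod p j = 0) (n : ℕ) :
    fibMod p (n + j) = fibMod p (j + 1) * fibMod p n := by
  induction n using Nat.twoStepInduction with
  | zero => simp [hj, fibMod]
  | one => simp [fibMod, add_comm]
  | more n ih₀ ih₁ =>
    rw [show n + 2 + j = n + j + 2 by ring, fibMod_add_two, fibMod_add_two,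
      show n + j + 1 = n + 1 + j by ring, ih₀, ih₁]
    ring

theorem fibMod_pisano (h : 0 < pisano p) :
    fibMod p (pisano p) = 0 ∧ fibMod p (pisano p + 1) = 1 :=
  (Nat.sInf_mem (Nat.nonempty_of_pos_sInf h)).2

theorem fibMod_add_pisano (h : 0 < pisano p) (n : ℕ) :
    fibMod p (n + pisano p) = fibMod p n := by
  rw [fibMod_add_of_fibMod_eq_zero (fibMod_pisano h).1, (fibMod_pisano h).2, one_mul]

theorem fibMod_pisano_sub_one (h : 0 < pisano p) : fibMod p (pisano p - 1) = 1 := by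
  have hrec := fibMod_add_two (p := p) (pisano p - 1)
  rwa [show pisano p - 1 + 2 = pisano p + 1 by omega, show pisano p - 1 + 1 = pisano p by omega,
    (fibMod_pisano h).1, (fibMod_pisano h).2, zero_add, eq_comm] at hrec

theorem fibMod_congr_of_modEq (h : 0 < pisano p) {a b : ℕ} (hab : a ≡ b [MOD pisano p]) :
    fibMod p a = fibMod p b := by
  have hper : Function.Periodic (fibMod p) (pisano p) := fibMod_add_pisano h
  rw [← hper.map_mod_nat a, hab, hper.map_mod_nat]

end Fibonacci

section PrimeField

variable {p : ℕ} [Fact p.Prime]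

theorem fibMod_eq_zero_iff_of_betaP_eq_two (hb : betaP p = 2) {i : ℕ}
    (hi : i < pisano p) : fibMod p i = 0 ↔ i = 0 ∨ 2 * i = pisano p := by
  set Z := (Finset.range (pisano p)).filter fun i => fibMod p i = 0
  have hZ : Z.card = 2 := hb
  have mem_Z : ∀ {i}, i ∈ Z ↔ i < pisano p ∧ fibMod p i = 0 := by simp [Z]
  have hpos : 0 < pisano p := by
    have : Z.card ≤ pisano p := (Finset.card_filter_le _ _).trans_eq (Finset.card_range _)
    omega
  obtain ⟨j, hjZ, hj0⟩ := Finset.exists_mem_ne (s := Z) (by omega) 0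
  obtain ⟨hjl, hj⟩ := mem_Z.1 hjZ
  have hZ_eq : Z = {0, j} := by
    refine (Finset.eq_of_subset_of_card_le ?_ (by rw [hZ, Finset.card_pair hj0.symm])).symm
    simp [Finset.insert_subset_iff, mem_Z, hjl, hj, hpos, fibMod]
  have hj1 : fibMod p (j + 1) ≠ 0 := by
    intro h
    have := fibMod_add_of_fibMod_eq_zero hj (pisano p + 1 - j)
    rw [Nat.sub_add_cancel (by omega), (fibMod_pisano hpos).2, h, zero_mul] at this
    exact one_ne_zero this
  -- `F_l = F_{j+1} F_{l-j}` makes `l - j` a zero as well, and it can only be `j`.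
  have hrefl : pisano p - j ∈ Z := by
    have := fibMod_add_of_fibMod_eq_zero hj (pisano p - j)
    rw [Nat.sub_add_cancel hjl.le, (fibMod_pisano hpos).1] at this
    exact mem_Z.2 ⟨by omega, (mul_eq_zero.1 this.symm).resolve_left hj1⟩
  have h2j : 2 * j = pisano p := by
    simp only [hZ_eq, Finset.mem_insert, Finset.mem_singleton] at hrefl
    omega
  calc fibMod p i = 0 ↔ i ∈ Z := by simp [mem_Z, hi]
    _ ↔ i = 0 ∨ i = j := by simp [hZ_eq]
    _ ↔ i = 0 ∨ 2 * i = pisano p := by omega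

theorem injOn_fibMod_div {n : ℕ} (hnz : ∀ k, 0 < k → k ≤ n → fibMod p k ≠ 0) :
    Set.InjOn (fun m => fibMod p m / fibMod p (m + 1)) (Set.Iio n) := by
  have hlt : ∀ u v, u < v → v < n →
      fibMod p u / fibMod p (u + 1) ≠ fibMod p v / fibMod p (v + 1) := by
    intro u v huv hvn heq
    rw [div_eq_div_iff (hnz _ (by omega) (by omega)) (hnz _ (by omega) (by omega))] at heq
    have hdoc := fibMod_add_mul_sub_mul (p := p) (v - u) u
    rw [Nat.add_sub_cancel' huv.le] at hdoc
    have hzero : (-1) ^ u * fibMod p (v - u) = 0 := by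
      rw [← hdoc]
      linear_combination (-1 : ZMod p) * heq
    exact hnz (v - u) (by omega) (by omega)
      ((mul_eq_zero.1 hzero).resolve_left (pow_ne_zero _ (neg_ne_zero.2 one_ne_zero)))
  intro u hu v hv huv
  rcases lt_trichotomy u v with h | h | h
  · exact absurd huv (hlt u v h hv)
  · exact h
  · exact absurd huv.symm (hlt v u h hu)

theorem exists_mul_fibMod_succ_add_fibMod_eq_zero
    (hnz : ∀ k, 0 < k → k ≤ p → fibMod p k ≠ 0) (a : ZMod p) :
    ∃ m < p, a * fibMod p (m + 1) + fibMod p m = 0 := by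
  classical
  have huniv : (Finset.range p).image (fun m => fibMod p m / fibMod p (m + 1)) = Finset.univ := by
    refine Finset.eq_univ_of_card _ ?_
    rw [Finset.card_image_of_injOn (by simpa using injOn_fibMod_div hnz), Finset.card_range,
      ZMod.card]
  obtain ⟨m, hm, hma⟩ := Finset.mem_image.1 (huniv ▸ Finset.mem_univ (-a))
  rw [Finset.mem_range] at hm
  rw [div_eq_iff (hnz _ (by omega) (by omega))] at hma
  exact ⟨m, hm, by linear_combination hma⟩

end PrimeField

section CyclicCode

variable {p l : ℕ}

theorem cyclicShift_smul_add_smul (a b : ZMod p) (v w : Fin l → ZMod p) :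
    cyclicShift p l (a • v + b • w) = a • cyclicShift p l v + b • cyclicShift p l w := rfl

theorem cyclicCode_eq_span_pair {g : (ZMod p)[X]}
    (h : cyclicShift p l (cyclicShift p l (polyVec p l g)) ∈
      span (ZMod p) {polyVec p l g, cyclicShift p l (polyVec p l g)}) :
    cyclicCode p l g = span (ZMod p) {polyVec p l g, cyclicShift p l (polyVec p l g)} := by
  set v := polyVec p l g
  have hv : v ∈ span (ZMod p) {v, cyclicShift p l v} := subset_span (by simp)
  have hsv : cyclicShift p l v ∈ span (ZMod p) {v, cyclicShift p l v} := subset_span (by simp)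
  have hinv : ∀ u ∈ span (ZMod p) {v, cyclicShift p l v},
      cyclicShift p l u ∈ span (ZMod p) {v, cyclicShift p l v} := by
    intro u hu
    obtain ⟨a, b, rfl⟩ := mem_span_pair.1 hu
    rw [cyclicShift_smul_add_smul]
    exact add_mem (smul_mem _ _ hsv) (smul_mem _ _ h)
  apply le_antisymm
  · refine span_le.2 ?_
    rintro _ ⟨k, rfl⟩
    induction k with
    | zero => exact hv
    | succ k ih => rw [Function.iterate_succ_apply']; exact hinv _ ih
  · refine span_le.2 ?_
    rintro _ (rfl | rfl)
    · exact subset_span ⟨0, rfl⟩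
    · exact subset_span ⟨1, rfl⟩

end CyclicCode

section FibonacciCode

variable {p l : ℕ}

def fibVec (p l : ℕ) : Fin l → ZMod p := fun i => fibMod p i

theorem polyVec_fibPoly : polyVec p (pisano p) (fibPoly p) = fibVec p (pisano p) := by
  funext i
  simp [polyVec, fibVec, fibPoly, finsetSum_coeff, coeff_C_mul, coeff_X_pow, i.isLt]

theorem cyclicShift_fibVec_apply (h : 0 < pisano p) (i : Fin (pisano p)) :
    cyclicShift p (pisano p) (fibVec p (pisano p)) i = fibMod p (i + (pisano p - 1)) :=
  fibMod_congr_of_modEq h (Nat.mod_modEq _ _)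

theorem cyclicShift_fibVec_zero (hl : pisano p = l) (h : 0 < l) :
    cyclicShift p l (fibVec p l) ⟨0, h⟩ = 1 := by
  subst hl
  rw [cyclicShift_fibVec_apply h, Fin.val_mk, zero_add, fibMod_pisano_sub_one h]

theorem cyclicShift_fibVec_apply_of_eq_succ (hl : pisano p = l) {i : Fin l} {m : ℕ}
    (hi : (i : ℕ) = m + 1) : cyclicShift p l (fibVec p l) i = fibMod p m := by
  subst hl
  rw [cyclicShift_fibVec_apply i.pos, hi, show m + 1 + (pisano p - 1) = m + pisano p by omega,
    fibMod_add_pisano i.pos]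

theorem cyclicShift_cyclicShift_fibVec (h : 2 ≤ pisano p) :
    cyclicShift p (pisano p) (cyclicShift p (pisano p) (fibVec p (pisano p))) =
      fibVec p (pisano p) - cyclicShift p (pisano p) (fibVec p (pisano p)) := by
  funext i
  have hpos : 0 < pisano p := by omega
  have hrec := fibMod_add_two (p := p) (i + (pisano p - 2))
  rw [show i + (pisano p - 2) + 2 = i + pisano p by omega, fibMod_add_pisano hpos,
    show i + (pisano p - 2) + 1 = i + (pisano p - 1) by omega] at hrec
  have hmod : (i + (pisano p - 1)) % pisano p + (pisano p - 1) ≡ i + (pisano p - 2)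
      [MOD pisano p] :=
    calc _ ≡ i + (pisano p - 1) + (pisano p - 1) [MOD pisano p] :=
          (Nat.mod_modEq _ _).add_right _
      _ = i + (pisano p - 2) + pisano p := by omega
      _ ≡ i + (pisano p - 2) [MOD pisano p] := by simp [Nat.ModEq]
  change cyclicShift p _ (fibVec p _) ⟨_, _⟩ = fibMod p i - cyclicShift p _ (fibVec p _) i
  rw [cyclicShift_fibVec_apply hpos, cyclicShift_fibVec_apply hpos, Fin.val_mk,
    fibMod_congr_of_modEq hpos hmod, hrec]
  ring

theorem fibCode_eq_span_pair (hl : pisano p = l) (h : 2 ≤ l) :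
    fibCode p l = span (ZMod p) {fibVec p l, cyclicShift p l (fibVec p l)} := by
  subst hl
  have hcode := cyclicCode_eq_span_pair (g := fibPoly p) (l := pisano p) (by
    rw [polyVec_fibPoly, cyclicShift_cyclicShift_fibVec h]
    exact sub_mem (subset_span (by simp)) (subset_span (by simp)))
  rwa [polyVec_fibPoly] at hcode

end FibonacciCode

section TwoDimensionalCode

variable {p l : ℕ} [Fact p.Prime] {V W : Fin l → ZMod p}

theorem IsMinimalCodeword.exists_eq_smul_add (hl : 0 < l) (hV0 : V ⟨0, hl⟩ = 0)
    (hW0 : W ⟨0, hl⟩ = 1) {c : Fin l → ZMod p}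
    (hc : IsMinimalCodeword p l (span (ZMod p) {V, W}) c) : ∃ a : ZMod p, c = a • V + W := by
  obtain ⟨a, b, rfl⟩ := mem_span_pair.1 hc.1
  have hb : b = 1 := by simpa [hV0, hW0] using hc.2.2.1 hl
  exact ⟨a, by rw [hb, one_smul]⟩

theorem isMinimalCodeword_smul_add (hl : 0 < l) (hV0 : V ⟨0, hl⟩ = 0) (hW0 : W ⟨0, hl⟩ = 1)
    {a : ZMod p} {i : Fin l} (hVi : V i ≠ 0) (hi : a * V i + W i = 0) :
    IsMinimalCodeword p l (span (ZMod p) {V, W}) (a • V + W) := by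
  refine ⟨mem_span_pair.2 ⟨a, 1, by rw [one_smul]⟩, fun h => ?_, fun _ => by simp [hV0, hW0],
    fun v hv hsupp => ?_⟩
  · simpa [hV0, hW0] using congrFun h ⟨0, hl⟩
  · obtain ⟨α, β, rfl⟩ := mem_span_pair.1 hv
    have hvi : α * V i + β * W i = 0 := by
      by_contra hne
      exact hsupp i (by simpa using hne) (by simpa using hi)
    have hα : α = β * a := by
      have : (α - β * a) * V i = 0 := by linear_combination hvi - β * hi
      exact sub_eq_zero.1 ((mul_eq_zero.1 this).resolve_right hVi)
    exact ⟨β, by rw [hα, smul_add, smul_smul]⟩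

theorem smul_add_injective_of_apply_ne_zero {i : Fin l} (hVi : V i ≠ 0) :
    Function.Injective fun a : ZMod p => a • V + W := by
  intro a b h
  simpa [hVi] using congrFun h i

theorem setOf_isMinimalCodeword_span_pair (hl : 0 < l) (hV0 : V ⟨0, hl⟩ = 0)
    (hW0 : W ⟨0, hl⟩ = 1) (hcover : ∀ a : ZMod p, ∃ i, V i ≠ 0 ∧ a * V i + W i = 0) :
    {c | IsMinimalCodeword p l (span (ZMod p) {V, W}) c} =
      Set.range fun a : ZMod p => a • V + W := by
  ext c
  constructor
  · intro hc
    obtain ⟨a, rfl⟩ := hc.exists_eq_smul_add hl hV0 hW0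
    exact ⟨a, rfl⟩
  · rintro ⟨a, rfl⟩
    obtain ⟨i, hVi, hi⟩ := hcover a
    exact isMinimalCodeword_smul_add hl hV0 hW0 hVi hi

theorem ncard_setOf_isMinimalCodeword_span_pair (hl : 0 < l) (hV0 : V ⟨0, hl⟩ = 0)
    (hW0 : W ⟨0, hl⟩ = 1) (hcover : ∀ a : ZMod p, ∃ i, V i ≠ 0 ∧ a * V i + W i = 0) :
    {c | IsMinimalCodeword p l (span (ZMod p) {V, W}) c}.ncard = p := by
  obtain ⟨i, hVi, -⟩ := hcover 0
  rw [setOf_isMinimalCodeword_span_pair hl hV0 hW0 hcover,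
    Set.ncard_range_of_injective (smul_add_injective_of_apply_ne_zero hVi), Nat.card_zmod]

theorem ncard_setOf_isMinimalCodeword_span_pair_apply_ne_zero (hl : 0 < l)
    (hV0 : V ⟨0, hl⟩ = 0) (hW0 : W ⟨0, hl⟩ = 1)
    (hcover : ∀ a : ZMod p, ∃ i, V i ≠ 0 ∧ a * V i + W i = 0) {i : Fin l}
    (hVi : V i ≠ 0) :
    {c | IsMinimalCodeword p l (span (ZMod p) {V, W}) c ∧ c i ≠ 0}.ncard = p - 1 := by
  have hpre : (fun a : ZMod p => a • V + W) ⁻¹' {c | c i ≠ 0} = {-W i / V i}ᶜ := by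
    ext a
    simp [eq_div_iff hVi, add_eq_zero_iff_eq_neg]
  have hset : {c | IsMinimalCodeword p l (span (ZMod p) {V, W}) c ∧ c i ≠ 0} =
      (fun a : ZMod p => a • V + W) '' {-W i / V i}ᶜ := by
    rw [← hpre, Set.image_preimage_eq_range_inter,
      ← setOf_isMinimalCodeword_span_pair hl hV0 hW0 hcover]
    rfl
  rw [hset, Set.ncard_image_of_injective _ (smul_add_injective_of_apply_ne_zero hVi),
    Set.ncard_compl, Set.ncard_singleton, Nat.card_zmod]

end TwoDimensionalCode

theorem fibCode_minimal_codewords_long_beta_two_general (p : ℕ) [Fact p.Prime]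
    (hl : pisano p = 2 * p + 2) (hb : betaP p = 2) :
    Set.ncard {c | IsMinimalCodeword p (2 * p + 2) (fibCode p (2 * p + 2)) c} = p ∧
      (∀ i : Fin (2 * p + 2), (i : ℕ) = p + 1 →
        ∀ c, IsMinimalCodeword p (2 * p + 2) (fibCode p (2 * p + 2)) c → c i ≠ 0) ∧
      ∀ i : Fin (2 * p + 2), 1 ≤ (i : ℕ) → (i : ℕ) ≠ p + 1 →
        Set.ncard {c | IsMinimalCodeword p (2 * p + 2) (fibCode p (2 * p + 2)) c ∧
          c i ≠ 0} = p - 1 := by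
  have hnz : ∀ k, 0 < k → k < 2 * p + 2 → k ≠ p + 1 → fibMod p k ≠ 0 := by
    intro k h0 hk hkp h
    have := (fibMod_eq_zero_iff_of_betaP_eq_two hb (by omega)).1 h
    omega
  have hpos : 0 < 2 * p + 2 := by omega
  have hp : 0 < p := (Fact.out : p.Prime).pos
  rw [fibCode_eq_span_pair hl (by omega)]
  set V := fibVec p (2 * p + 2)
  set W := cyclicShift p (2 * p + 2) V
  have hW : ∀ {i : Fin (2 * p + 2)} {m}, (i : ℕ) = m + 1 → W i = fibMod p m :=
    cyclicShift_fibVec_apply_of_eq_succ hl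
  have hV0 : V ⟨0, hpos⟩ = 0 := rfl
  have hW0 : W ⟨0, hpos⟩ = 1 := cyclicShift_fibVec_zero hl hpos
  have hcover : ∀ a : ZMod p, ∃ i, V i ≠ 0 ∧ a * V i + W i = 0 := fun a => by
    obtain ⟨m, hm, ha⟩ := exists_mul_fibMod_succ_add_fibMod_eq_zero
      (fun k h0 hk => hnz k h0 (by omega) (by omega)) a
    exact ⟨⟨m + 1, by omega⟩, hnz (m + 1) (by omega) (by omega) (by omega), by rwa [hW rfl]⟩
  refine ⟨ncard_setOf_isMinimalCodeword_span_pair hpos hV0 hW0 hcover, fun i hi c hc => ?_,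
    fun i hi1 hip =>
      ncard_setOf_isMinimalCodeword_span_pair_apply_ne_zero hpos hV0 hW0 hcover
        (hnz i (by omega) i.isLt hip)⟩
  obtain ⟨a, rfl⟩ := hc.exists_eq_smul_add hpos hV0 hW0
  have hVi : V i = 0 :=
    (fibMod_eq_zero_iff_of_betaP_eq_two hb (by omega)).2 (Or.inr (by omega))
  simpa [hVi, hW hi] using hnz p hp (by omega) (by omega)

/-- For an odd prime `p` with `l_p = 2p + 2` and `β(p) = 2`, the
`[2p+2, 2, 2p]` cyclic code `C = ⟨f(x)⟩` has exactly `p` minimal codewords; coordinate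
`p + 1` lies in the support of every minimal codeword (a dictatorial participant in the
associated secret sharing scheme); and every other coordinate `i ≠ 0` lies in the support
of exactly `p - 1` minimal codewords. -/
theorem fibCode_minimal_codewords_long_beta_two (p : ℕ) [Fact p.Prime] (hodd : Odd p)
    (hl : pisano p = 2 * p + 2) (hb : betaP p = 2) :
    Set.ncard {c | IsMinimalCodeword p (2 * p + 2) (fibCode p (2 * p + 2)) c} = p ∧
      (∀ i : Fin (2 * p + 2), (i : ℕ) = p + 1 →
        ∀ c, IsMinimalCodeword p (2 * p + 2) (fibCode p (2 * p + 2)) c → c i ≠ 0) ∧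
      ∀ i : Fin (2 * p + 2), 1 ≤ (i : ℕ) → (i : ℕ) ≠ p + 1 →
        Set.ncard {c | IsMinimalCodeword p (2 * p + 2) (fibCode p (2 * p + 2)) c ∧
          c i ≠ 0} = p - 1 :=
  fibCode_minimal_codewords_long_beta_two_general p hl hb
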